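/- arXiv:1510.05412 — 2 statements merged into one kernel-verified Lean document; each statement's English description precedes it below -/
import Mathlib

section
/- Let G be a σ-compact locally compact group, H a closed subgroup, and N = ⋂_{x∈G} xHx⁻¹ the normal core of H. Then χ(G/N) ≤ χ(G/H) + ℵ₀. -/
/-!
Let `{s i}` be a neighbourhood base of the coset `H` in `G ⧸ H`, `Q` a compact neighbourhood of
`1`, and `K₀ ⊆ K₁ ⊆ ⋯` compact sets covering `G`. The images in `G ⧸ N` of the neighbourhoods
`Q ∩ {g | x g x⁻¹ H ∈ s i for all x ∈ Kₙ}` of `1` form a neighbourhood base of `N` indexed by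
`ℕ × ι`. Indeed, `G ⧸ H` is regular and T1, so the closed sets `{g | x g x⁻¹ H ∈ closure (s i)}`,
over all `x ∈ G` and `i`, intersect in `N`. Given an open `O ⊇ N`, compactness of `Q ∖ O` then
yields finitely many of them missing `Q ∖ O`, and the finitely many `x` involved
lie in a single `Kₙ`.
-/

open Topology

/-- The local weight (character) of a topological space at a point: the least cardinality
of a neighbourhood base at the point. -/
noncomputable def localWeight (X : Type u) [TopologicalSpace X] (x : X) : Cardinal.{u} :=
  ⨅ B : {S : Set (Set X) // (𝓝 x).HasBasis (· ∈ S) id}, Cardinal.mk B.1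

open Set Filter Cardinal Pointwise

section LocalWeight

variable {X : Type u} [TopologicalSpace X]

theorem localWeight_le_mk_of_hasBasis {x : X} {ι : Type u} {p : ι → Prop} {s : ι → Set X}
    (h : (𝓝 x).HasBasis p s) : localWeight X x ≤ #ι :=
  (ciInf_le' _ (⟨_, h.to_image_id⟩ : {S : Set (Set X) // (𝓝 x).HasBasis (· ∈ S) id})).trans
    (mk_image_le.trans (mk_subtype_le _))

theorem exists_hasBasis_mk_eq_localWeight (x : X) :
    ∃ (ι : Type u) (s : ι → Set X), (𝓝 x).HasBasis (fun _ => True) s ∧ #ι = localWeight X x := by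
  have : Nonempty {S : Set (Set X) // (𝓝 x).HasBasis (· ∈ S) id} := ⟨⟨_, (𝓝 x).basis_sets⟩⟩
  obtain ⟨⟨S, hS⟩, hSw⟩ := ciInf_mem fun B : {S : Set (Set X) // (𝓝 x).HasBasis (· ∈ S) id} =>
    #B.1
  exact ⟨S, Subtype.val, ⟨fun t => by simp [hS.mem_iff]⟩, hSw⟩

end LocalWeight

section TopologicalGroup

variable {G : Type*} [Group G] [TopologicalSpace G] [IsTopologicalGroup G]

theorem IsCompact.eventually_forall_conj_mem {K U : Set G} (hK : IsCompact K) (hU : U ∈ 𝓝 1) :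
    ∀ᶠ g in 𝓝 1, ∀ x ∈ K, x * g * x⁻¹ ∈ U :=
  hK.eventually_forall_of_forall_eventually fun x _ =>
    (by fun_prop : Continuous fun z : G × G => z.2 * z.1 * z.2⁻¹).continuousAt.preimage_mem_nhds
      (by simpa using hU)

instance QuotientGroup.instRegularSpace (H : Subgroup G) : RegularSpace (G ⧸ H) := by
  refine .of_exists_mem_nhds_isClosed_subset fun a s hs => ?_
  induction a using QuotientGroup.induction_on with | H g => ?_
  have hmul : Tendsto (fun p : G × G => p.1 * p.2) (𝓝 (1, g)) (𝓝 g) :=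
    continuous_mul.tendsto' _ _ (one_mul g)
  obtain ⟨V, hV, U, hU, hVU⟩ := mem_nhds_prod_iff.mp
    (hmul (QuotientGroup.continuous_mk.continuousAt.preimage_mem_nhds hs))
  refine ⟨closure (QuotientGroup.mk '' U),
    mem_of_superset (QuotientGroup.isOpenMap_coe.image_mem_nhds hU) subset_closure,
    isClosed_closure, ?_⟩
  rw [← QuotientGroup.mk_surjective.preimage_subset_preimage_iff,
    QuotientGroup.isOpenMap_coe.preimage_closure_eq_closure_preimage QuotientGroup.continuous_mk,
    QuotientGroup.preimage_image_mk_eq_mul]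
  intro y hy
  have hV1 : (1 : G) ∈ interior V := mem_interior_iff_mem_nhds.2 hV
  have hyVUH : y ∈ interior V * (U * (H : Set G)) := by
    simpa [isOpen_interior.mul_closure] using mul_mem_mul hV1 hy
  obtain ⟨v, hv, _, ⟨u, hu, h, hh, rfl⟩, rfl⟩ := hyVUH
  show ((v * (u * h) : G) : G ⧸ H) ∈ s
  rw [← mul_assoc, QuotientGroup.mk_mul_of_mem _ hh]
  exact hVU (mk_mem_prod (interior_subset hv) hu)

theorem exists_finset_conj_notMem_of_disjoint_normalCore {H : Subgroup G}
    (hH : IsClosed (H : Set G)) {ι : Type*} {p : ι → Prop} {s : ι → Set (G ⧸ H)}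
    (hS : (𝓝 (QuotientGroup.mk 1 : G ⧸ H)).HasBasis p s) {C : Set G} (hC : IsCompact C)
    (hCN : Disjoint C H.normalCore) :
    ∃ (F : Finset G) (i : ι), p i ∧ ∀ g ∈ C, ∃ x ∈ F, ((x * g * x⁻¹ : G) : G ⧸ H) ∉ s i := by
  classical
  have : T1Space (G ⧸ H) := QuotientGroup.t1Space_iff.mpr hH
  let Z : G × {i // p i} → Set G := fun j => {g | ((j.1 * g * j.1⁻¹ : G) : G ⧸ H) ∈ closure (s j.2)}
  have hZ : ∀ j, IsClosed (Z j) := fun j =>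
    isClosed_closure.preimage <| QuotientGroup.continuous_mk.comp
      (by fun_prop : Continuous fun g : G => j.1 * g * j.1⁻¹)
  have hker : ⋂ (i) (_ : p i), closure (s i) = {((1 : G) : G ⧸ H)} :=
    hS.nhds_closure.ker.symm.trans (ker_nhds _)
  have hZN : C ∩ ⋂ j, Z j = ∅ := by
    refine eq_empty_of_forall_notMem fun g ⟨hgC, hgZ⟩ => hCN.notMem_of_mem_left hgC fun x => ?_
    have hx : ((x * g * x⁻¹ : G) : G ⧸ H) ∈ ⋂ (i) (_ : p i), closure (s i) :=
      mem_iInter₂.2 fun i hi => mem_iInter.1 hgZ (x, ⟨i, hi⟩)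
    rwa [hker, mem_singleton_iff, QuotientGroup.eq, mul_one, inv_mem_iff] at hx
  obtain ⟨u, hu⟩ := hC.elim_finite_subfamily_closed Z hZ hZN
  obtain ⟨i, hi, hsi⟩ := hS.mem_iff.1 <|
    (biInter_finset_mem u).2 fun j _ => hS.mem_of_mem j.2.2
  refine ⟨u.image Prod.fst, i, hi, fun g hgC => ?_⟩
  obtain ⟨j, hju, hgj⟩ : ∃ j ∈ u, g ∉ Z j := by
    by_contra! h
    exact (eq_empty_iff_forall_notMem.1 hu) g ⟨hgC, mem_iInter₂.2 h⟩
  exact ⟨j.1, Finset.mem_image_of_mem _ hju, fun hgs =>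
    hgj (subset_closure (mem_iInter₂.1 (hsi hgs) j hju))⟩

theorem hasBasis_nhds_mk_one_normalCore [SigmaCompactSpace G] {H : Subgroup G}
    (hH : IsClosed (H : Set G)) {ι : Type*} {p : ι → Prop} {s : ι → Set (G ⧸ H)}
    (hS : (𝓝 (QuotientGroup.mk 1 : G ⧸ H)).HasBasis p s) {Q : Set G} (hQ : IsCompact Q)
    (hQ1 : Q ∈ 𝓝 1) :
    (𝓝 (QuotientGroup.mk 1 : G ⧸ H.normalCore)).HasBasis (fun j : ℕ × ι => p j.2) fun j =>
      QuotientGroup.mk '' (Q ∩ {g | ∀ x ∈ compactCovering G j.1,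
        ((x * g * x⁻¹ : G) : G ⧸ H) ∈ s j.2}) := by
  refine ⟨fun t => ⟨fun ht => ?_, fun ⟨j, hj, hjt⟩ => mem_of_superset ?_ hjt⟩⟩
  · set O : Set G := QuotientGroup.mk ⁻¹' interior t
    have hO : IsOpen O := isOpen_interior.preimage QuotientGroup.continuous_mk
    have hNO : Disjoint (Q \ O) H.normalCore := by
      refine disjoint_left.2 fun g hg hgN => hg.2 ?_
      rw [mem_preimage, (QuotientGroup.eq_one_iff g).2 hgN]
      exact mem_interior_iff_mem_nhds.2 ht
    obtain ⟨F, i, hi, hF⟩ :=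
      exists_finset_conj_notMem_of_disjoint_normalCore hH hS (hQ.diff hO) hNO
    have hFn : ∀ᶠ n in atTop, ∀ x ∈ F, x ∈ compactCovering G n :=
      F.eventually_all.2 fun x _ =>
        let ⟨m, hm⟩ := exists_mem_compactCovering x
        eventually_atTop.2 ⟨m, fun _ hn => compactCovering_subset G hn hm⟩
    obtain ⟨n, hn⟩ := hFn.exists
    refine ⟨(n, i), hi, ?_⟩
    rintro _ ⟨g, ⟨hgQ, hgW⟩, rfl⟩
    by_contra hgt
    obtain ⟨x, hxF, hx⟩ := hF g ⟨hgQ, fun hgO => hgt (interior_subset hgO)⟩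
    exact hx (hgW x (hn x hxF))
  · exact QuotientGroup.isOpenMap_coe.image_mem_nhds <| inter_mem hQ1 <|
      (isCompact_compactCovering G j.1).eventually_forall_conj_mem <|
        QuotientGroup.continuous_mk.continuousAt.preimage_mem_nhds (hS.mem_of_mem hj)

end TopologicalGroup

theorem stmt_9_general {G : Type u} [Group G] [TopologicalSpace G] [IsTopologicalGroup G]
    [LocallyCompactSpace G] [SigmaCompactSpace G]
    (H : Subgroup G) (hcl : IsClosed (H : Set G)) :
    localWeight (G ⧸ H.normalCore) (QuotientGroup.mk 1) ≤
      localWeight (G ⧸ H) (QuotientGroup.mk 1) + Cardinal.aleph0 := by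
  obtain ⟨ι, s, hS, hι⟩ := exists_hasBasis_mk_eq_localWeight (QuotientGroup.mk 1 : G ⧸ H)
  obtain ⟨Q, hQ, hQ1⟩ := exists_compact_mem_nhds (1 : G)
  calc localWeight (G ⧸ H.normalCore) (QuotientGroup.mk 1)
      ≤ #(ℕ × ι) := localWeight_le_mk_of_hasBasis (hasBasis_nhds_mk_one_normalCore hcl hS hQ hQ1)
    _ = ℵ₀ * #ι := by simp
    _ ≤ max ℵ₀ #ι := mul_le_max_of_aleph0_le_left le_rfl
    _ ≤ localWeight (G ⧸ H) (QuotientGroup.mk 1) + ℵ₀ := hι ▸ max_le le_add_self le_self_add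

/-- If `G` is a σ-compact locally compact group, `H` a closed subgroup,
and `N = ⋂_{x ∈ G} x H x⁻¹` the normal core of `H`, then `χ(G/N) ≤ χ(G/H) + ℵ₀`. -/
theorem stmt_9 {G : Type u} [Group G] [TopologicalSpace G] [IsTopologicalGroup G]
    [LocallyCompactSpace G] [T2Space G] [SigmaCompactSpace G]
    (H : Subgroup G) (hcl : IsClosed (H : Set G)) :
    localWeight (G ⧸ H.normalCore) (QuotientGroup.mk 1) ≤
      localWeight (G ⧸ H) (QuotientGroup.mk 1) + Cardinal.aleph0 :=
  stmt_9_general H hcl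
end

section
/- Let G be a locally compact group, μ ∈ M(G) with μ ∗ δ_p ⊥ μ ∗ δ_{p'} for all distinct p, p' in an uncountable set P ⊆ G, and let D ⊆ M(G) be a set of measures with |D| < |P|. Then there exists x ∈ P such that μ ∗ δ_x is mutually singular to every measure in D. -/
/-!
For a finite measure `ν`, the parts `μ ∗ δ_p ⊓ ν` lie below `ν` and are pairwise singular, so
their total masses are summable and only countably many are nonzero: `ν` fails to be singular to
`μ ∗ δ_p` for only countably many `p`. The bad points of all `ν ∈ D` thus form a set of size at
most `|D| · ℵ₀ < |P|`, and any point of `P` outside it works.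
-/

open MeasureTheory Cardinal

namespace MeasureTheory.Measure

variable {α : Type*} [MeasurableSpace α]

lemma add_le_of_mutuallySingular {μ₁ μ₂ ν : Measure α} (h₁ : μ₁ ≤ ν) (h₂ : μ₂ ≤ ν)
    (h : μ₁ ⟂ₘ μ₂) : μ₁ + μ₂ ≤ ν := by
  obtain ⟨t, ht, hμ₁t, hμ₂t⟩ := h
  calc μ₁ + μ₂ = μ₁.restrict tᶜ + μ₂.restrict t := by
        rw [restrict_eq_self_of_ae_mem (s := tᶜ) (compl_mem_ae_iff.2 hμ₁t),
          restrict_eq_self_of_ae_mem (s := t) (mem_ae_iff.2 hμ₂t)]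
    _ ≤ ν.restrict tᶜ + ν.restrict t :=
        add_le_add (restrict_mono subset_rfl h₁) (restrict_mono subset_rfl h₂)
    _ = ν := by rw [add_comm, restrict_add_restrict_compl ht]

lemma finsetSum_le_of_pairwise_mutuallySingular {ι : Type*} {m : ι → Measure α}
    {ν : Measure α} (hle : ∀ i, m i ≤ ν) (hm : Pairwise fun i j => m i ⟂ₘ m j) (s : Finset ι) :
    ∑ i ∈ s, m i ≤ ν := by
  classical
  induction s using Finset.induction_on with
  | empty => exact Measure.zero_le ν
  | insert a s ha ih =>
    have hsing : m a ⟂ₘ ∑ i ∈ s, m i :=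
      Finset.sum_induction _ (m a ⟂ₘ ·) (fun _ _ => MutuallySingular.add_right)
        MutuallySingular.zero_right fun i hi => hm (ne_of_mem_of_not_mem hi ha).symm
    rw [Finset.sum_insert ha]
    exact add_le_of_mutuallySingular (hle a) ih hsing

lemma countable_setOf_ne_zero_of_pairwise_mutuallySingular {ι : Type*} {m : ι → Measure α}
    {ν : Measure α} [IsFiniteMeasure ν] (hle : ∀ i, m i ≤ ν)
    (hm : Pairwise fun i j => m i ⟂ₘ m j) : {i | m i ≠ 0}.Countable := by
  have htsum : ∑' i, m i Set.univ ≤ ν Set.univ :=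
    ENNReal.summable.tsum_le_of_sum_le fun s => by
      rw [← finsetSum_apply]
      exact finsetSum_le_of_pairwise_mutuallySingular hle hm s _
  refine (Summable.countable_support_ennreal (htsum.trans_lt (measure_lt_top ν _)).ne).mono ?_
  intro i hi
  simpa [Function.mem_support, measure_univ_eq_zero] using hi

lemma countable_setOf_not_mutuallySingular {ι : Type*} {m : ι → Measure α}
    (hm : Pairwise fun i j => m i ⟂ₘ m j) (ν : Measure α) [IsFiniteMeasure ν] :
    {i | ¬ m i ⟂ₘ ν}.Countable := by
  have hinf := countable_setOf_ne_zero_of_pairwise_mutuallySingular (m := fun i => m i ⊓ ν)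
    (fun _ => inf_le_right) fun i j hij => (hm hij).mono inf_le_left inf_le_left
  convert hinf using 3 with i
  rw [mutuallySingular_iff_disjoint, disjoint_iff]
  rfl

end MeasureTheory.Measure

lemma Cardinal.exists_forall_notMem_of_countable {α ι : Type u} (s : ι → Set α)
    (hs : ∀ i, (s i).Countable) (hα : ℵ₀ < #α) (hι : #ι < #α) : ∃ a, ∀ i, a ∉ s i := by
  have hsmall : #(⋃ i, s i) < #α :=
    calc #(⋃ i, s i) ≤ #ι * ⨆ i, #(s i) := mk_iUnion_le s
      _ ≤ #ι * ℵ₀ := mul_le_mul_right (ciSup_le' fun i => (hs i).le_aleph0) _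
      _ < #α := mul_lt_of_lt hα.le hι hα
  have hnotCover : (⋃ i, s i) ≠ Set.univ := fun h => by
    rw [h, mk_univ] at hsmall
    exact hsmall.false
  obtain ⟨a, ha⟩ := Set.ne_univ_iff_exists_notMem _ |>.1 hnotCover
  exact ⟨a, fun i hi => ha (Set.mem_iUnion_of_mem i hi)⟩

theorem stmt_14_general {G : Type u} [Group G] [MeasurableSpace G]
    (μ : Measure G)
    (P : Set G) (hP : Cardinal.aleph0 < Cardinal.mk P)
    (hsing : P.Pairwise fun p p' => μ.map (· * p) ⟂ₘ μ.map (· * p'))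
    (D : Set (Measure G)) (hDfin : ∀ ν ∈ D, IsFiniteMeasure ν)
    (hD : Cardinal.mk D < Cardinal.mk P) :
    ∃ x ∈ P, ∀ ν ∈ D, μ.map (· * x) ⟂ₘ ν := by
  have hbad : ∀ ν : D, {p : P | ¬ μ.map (· * (p : G)) ⟂ₘ ν}.Countable := fun ν =>
    have := hDfin ν ν.2
    Measure.countable_setOf_not_mutuallySingular
      (fun p q hpq => hsing p.2 q.2 (Subtype.coe_ne_coe.2 hpq)) ν
  obtain ⟨x, hx⟩ := exists_forall_notMem_of_countable _ hbad hP hD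
  exact ⟨x, x.2, fun ν hν => not_not.1 (hx ⟨ν, hν⟩)⟩

/-- Let `μ ∈ M(G)` with `μ ∗ δ_p ⊥ μ ∗ δ_{p'}` for all distinct `p, p'`
in an uncountable set `P ⊆ G`, and let `D` be a set of bounded measures with `|D| < |P|`.
Then there is `x ∈ P` such that `μ ∗ δ_x` is mutually singular to every measure in `D`. -/
theorem stmt_14 {G : Type u} [Group G] [TopologicalSpace G] [IsTopologicalGroup G]
    [LocallyCompactSpace G] [T2Space G] [MeasurableSpace G] [BorelSpace G]
    (μ : Measure G) [IsFiniteMeasure μ]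
    (P : Set G) (hP : Cardinal.aleph0 < Cardinal.mk P)
    (hsing : P.Pairwise fun p p' => μ.map (· * p) ⟂ₘ μ.map (· * p'))
    (D : Set (Measure G)) (hDfin : ∀ ν ∈ D, IsFiniteMeasure ν)
    (hD : Cardinal.mk D < Cardinal.mk P) :
    ∃ x ∈ P, ∀ ν ∈ D, μ.map (· * x) ⟂ₘ ν :=
  stmt_14_general μ P hP hsing D hDfin hD
end
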